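/- Let A be a unital F-algebra with involution, char F ≠ 2, and let ∂ be a derivation of h_n(A) under the anticommutator with ∂(E_{ii}) = 0 and ∂(E_{jj}) = 0 for some i ≠ j. Then for every z ∈ A, the matrix ∂(zE_{ij} + z̄E_{ji}) is supported only in positions (i,j) and (j,i); i.e. there is a linear map α : A → A with ∂(zE_{ij} + z̄E_{ji}) = α(z)E_{ij} + α(z)‾E_{ji}. -/

import Mathlib

open Matrix

/-!
Write `M z = z E_ij + z̄ E_ji` and `e ∘ x = e x + x e`. Since `E_kk ∘ M z = M z` for `k = i, j`
and `∂ E_kk = 0`, the Leibniz rule gives `E_kk ∘ ∂(M z) = ∂(M z)`. Evaluating this entrywise,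
every entry of `∂(M z)` away from row and column `k` vanishes; doing so for both `k = i` and
`k = j` leaves only the entries `(i, j)` and `(j, i)`, which are conjugate because `∂(M z)` is
hermitian. Hence `α z := ∂(M z)_ij` works.
-/

namespace Matrix

variable {n A : Type*} [DecidableEq n]

section Jordan

variable [Fintype n] [NonAssocSemiring A]

theorem single_one_mul_add_mul_single_one_apply (k a b : n) (X : Matrix n n A) :
    (single k k 1 * X + X * single k k 1 : Matrix n n A) a b =
      (if a = k then X k b else 0) + (if b = k then X a k else 0) := by
  rw [add_apply]
  congr 1
  · split_ifs with ha
    · rw [ha, single_mul_apply_same, one_mul]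
    · exact single_mul_apply_of_ne _ _ _ _ _ ha X
  · split_ifs with hb
    · rw [hb, mul_single_apply_same, mul_one]
    · exact mul_single_apply_of_ne _ _ _ _ _ hb X

theorem apply_eq_zero_of_single_one_mul_add_mul_single_one_eq {k a b : n} {X : Matrix n n A}
    (hX : single k k 1 * X + X * single k k 1 = X) (ha : a ≠ k) (hb : b ≠ k) : X a b = 0 := by
  rw [← hX, single_one_mul_add_mul_single_one_apply, if_neg ha, if_neg hb, add_zero]

theorem single_one_mul_add_mul_single_one_of_ne {k l : n} (hkl : k ≠ l) (z w : A) :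
    single k k 1 * (single k l z + single l k w) + (single k l z + single l k w) * single k k 1 =
      single k l z + single l k w := by
  simp [mul_add, add_mul, hkl, hkl.symm]

end Jordan

theorem eq_single_add_single_of_apply_eq_zero [AddZeroClass A] {i j : n} (hij : i ≠ j)
    {X : Matrix n n A} (hi : ∀ a b, a ≠ i → b ≠ i → X a b = 0)
    (hj : ∀ a b, a ≠ j → b ≠ j → X a b = 0) :
    X = single i j (X i j) + single j i (X j i) := by
  ext a b
  simp only [add_apply]
  by_cases hab : i = a ∧ j = b
  · obtain ⟨rfl, rfl⟩ := hab
    simp [hij]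
  by_cases hba : j = a ∧ i = b
  · obtain ⟨rfl, rfl⟩ := hba
    simp [hij]
  simp only [single_apply_of_ne (h := hab), single_apply_of_ne (h := hba), add_zero]
  by_cases hai : a = i
  · exact hj a b (hai ▸ hij) fun hbj => hab ⟨hai.symm, hbj.symm⟩
  by_cases hbi : b = i
  · exact hj a b (fun haj => hba ⟨haj.symm, hbi.symm⟩) (hbi ▸ hij)
  · exact hi a b hai hbi

section HermitianSingle

variable (F : Type*) [Semiring F] [AddCommMonoid A] [StarAddMonoid A] [Module F A]
  (hstar : ∀ (c : F) (z : A), star (c • z) = c • star z)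

def hermitianSingle (i j : n) : A →ₗ[F] Matrix n n A where
  toFun z := single i j z + single j i (star z)
  map_add' x y := by
    simp only [star_add, single_add]
    abel
  map_smul' c z := by simp only [hstar, smul_single, smul_add, RingHom.id_apply]

theorem hermitianSingle_apply (i j : n) (z : A) :
    hermitianSingle F hstar i j z = single i j z + single j i (star z) :=
  rfl

theorem conjTranspose_hermitianSingle (i j : n) (z : A) :
    (hermitianSingle F hstar i j z)ᴴ = hermitianSingle F hstar i j z := by
  rw [hermitianSingle_apply, conjTranspose_add, conjTranspose_single, conjTranspose_single,
    star_star, add_comm]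

end HermitianSingle

theorem single_one_mul_add_mul_single_one_map_eq [Fintype n] [NonAssocSemiring A] [StarRing A]
    {D : Matrix n n A → Matrix n n A}
    (hleib : ∀ x y : Matrix n n A, xᴴ = x → yᴴ = y →
      D (x * y + y * x) = (D x * y + y * D x) + (x * D y + D y * x))
    {k : n} (hDk : D (single k k 1) = 0) {x : Matrix n n A} (hx : xᴴ = x)
    (hkx : single k k 1 * x + x * single k k 1 = x) :
    single k k 1 * D x + D x * single k k 1 = D x := by
  have h := hleib (single k k 1) x (by rw [conjTranspose_single, star_one]) hx
  rw [hkx, hDk] at h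
  simpa using h.symm

end Matrix

theorem derivation_offdiagonal_support_general {F A n : Type*} [Field F] [NonAssocRing A]
    [Module F A] [StarRing A] [Fintype n] [DecidableEq n]
    (hstarl : ∀ (c : F) (z : A), star (c • z) = c • star z)
    (D : Matrix n n A →ₗ[F] Matrix n n A)
    (hpres : ∀ x : Matrix n n A, xᴴ = x → (D x)ᴴ = D x)
    (hleib : ∀ x y : Matrix n n A, xᴴ = x → yᴴ = y →
      D (x * y + y * x) = (D x * y + y * D x) + (x * D y + D y * x))
    (i j : n) (hij : i ≠ j)
    (hEi : D (single i i (1 : A)) = 0)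
    (hEj : D (single j j (1 : A)) = 0) :
    ∃ α : A →ₗ[F] A, ∀ z : A,
      D (single i j z + single j i (star z)) =
        single i j (α z) + single j i (star (α z)) := by
  set M := hermitianSingle F hstarl i j
  refine ⟨entryLinearMap F A i j ∘ₗ D ∘ₗ M, fun z => ?_⟩
  have hM : (M z)ᴴ = M z := conjTranspose_hermitianSingle F hstarl i j z
  have hDi : single i i (1 : A) * D (M z) + D (M z) * single i i 1 = D (M z) :=
    single_one_mul_add_mul_single_one_map_eq hleib hEi hM
      (single_one_mul_add_mul_single_one_of_ne hij _ _)
  have hDj : single j j (1 : A) * D (M z) + D (M z) * single j j 1 = D (M z) := by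
    refine single_one_mul_add_mul_single_one_map_eq hleib hEj hM ?_
    rw [hermitianSingle_apply, add_comm (single i j z)]
    exact single_one_mul_add_mul_single_one_of_ne hij.symm _ _
  have hji : D (M z) j i = star (D (M z) i j) := by
    rw [← congr_fun₂ (hpres _ hM) j i, conjTranspose_apply]
  change D (M z) = single i j (D (M z) i j) + single j i (star (D (M z) i j))
  rw [← hji]
  exact eq_single_add_single_of_apply_eq_zero hij
    (fun _ _ => apply_eq_zero_of_single_one_mul_add_mul_single_one_eq hDi)
    (fun _ _ => apply_eq_zero_of_single_one_mul_add_mul_single_one_eq hDj)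

/-- If `∂` is a derivation of the hermitian `n × n` matrices
under the anticommutator with `∂(E_ii) = 0` and `∂(E_jj) = 0` for some `i ≠ j`,
then there is an `F`-linear map `α : A → A` such that
`∂(z E_ij + z̄ E_ji) = α(z) E_ij + α(z)‾ E_ji` for every `z`. -/
theorem derivation_offdiagonal_support {F A n : Type*} [Field F] [NonAssocRing A]
    [Module F A] [StarRing A] [Fintype n] [DecidableEq n]
    (h2 : (2 : F) ≠ 0)
    (hstarl : ∀ (c : F) (z : A), star (c • z) = c • star z)
    (D : Matrix n n A →ₗ[F] Matrix n n A)
    (hpres : ∀ x : Matrix n n A, xᴴ = x → (D x)ᴴ = D x)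
    (hleib : ∀ x y : Matrix n n A, xᴴ = x → yᴴ = y →
      D (x * y + y * x) = (D x * y + y * D x) + (x * D y + D y * x))
    (i j : n) (hij : i ≠ j)
    (hEi : D (single i i (1 : A)) = 0)
    (hEj : D (single j j (1 : A)) = 0) :
    ∃ α : A →ₗ[F] A, ∀ z : A,
      D (single i j z + single j i (star z)) =
        single i j (α z) + single j i (star (α z)) :=
  derivation_offdiagonal_support_general hstarl D hpres hleib i j hij hEi hEj
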